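/- arXiv:1909.12121 — 5 statements merged into one kernel-verified Lean document; each statement's English description precedes it below -/
import Mathlib

section
/- If f : S → S and g : T → T are homeomorphisms of metric spaces that are topologically conjugate via a homeomorphism h : S → T (i.e., h ∘ f = g ∘ h), and f is topologically expansive (there exists a continuous strictly positive function ε : S → ℝ such that for all x ≠ y in S there is k ∈ ℤ with d(f^k x, f^k y) > ε(f^k x)), then g is topologically expansive. -/
/-!
Expansivity with a continuous positive gauge `ε` is equivalent to the existence of an open
neighbourhood `U` of the diagonal that every pair of distinct points leaves at some time of
its orbit: from `ε` take `U = {(x, y) | d(x, y) < ε x}`, and from `U` take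
`ε x = infDist (x, x) Uᶜ / 2`. The second condition mentions no metric, so it is carried
across the conjugacy by pulling `U` back along `h⁻¹ × h⁻¹`.
-/

open Set Metric

section

variable {S T : Type*}

def IsTopologicallyExpansive [PseudoMetricSpace S] (f : S ≃ₜ S) : Prop :=
  ∃ ε : S → ℝ, Continuous ε ∧ (∀ x, 0 < ε x) ∧
    ∀ x y : S, x ≠ y → ∃ k : ℤ,
      ε ((f.toEquiv ^ k) x) < dist ((f.toEquiv ^ k) x) ((f.toEquiv ^ k) y)

def HasExpansivityNhd [TopologicalSpace S] (f : S ≃ₜ S) : Prop :=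
  ∃ U : Set (S × S), IsOpen U ∧ diagonal S ⊆ U ∧
    ∀ x y : S, x ≠ y → ∃ k : ℤ, ((f.toEquiv ^ k) x, (f.toEquiv ^ k) y) ∉ U

theorem Equiv.Perm.zpow_eq_permCongr_of_semiconj {f : Equiv.Perm S} {g : Equiv.Perm T}
    (h : S ≃ T) (hconj : Function.Semiconj h f g) (k : ℤ) :
    g ^ k = h.permCongr (f ^ k) := by
  have hg : g = h.permCongrHom f := by
    ext t
    simp [Equiv.permCongrHom_coe, Equiv.permCongr_apply, hconj.eq]
  rw [hg, ← map_zpow, Equiv.permCongrHom_coe]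

theorem HasExpansivityNhd.of_semiconj [TopologicalSpace S] [TopologicalSpace T]
    {f : S ≃ₜ S} {g : T ≃ₜ T} (h : S ≃ₜ T) (hconj : Function.Semiconj h f g)
    (hf : HasExpansivityNhd f) : HasExpansivityNhd g := by
  obtain ⟨U, hUo, hdiag, hsep⟩ := hf
  refine ⟨Prod.map h.symm h.symm ⁻¹' U, hUo.preimage (h.symm.continuous.prodMap h.symm.continuous),
    ?_, fun x y hxy => ?_⟩
  · rintro ⟨a, b⟩ (rfl : a = b)
    exact hdiag (mem_diagonal (h.symm a))
  · obtain ⟨k, hk⟩ := hsep _ _ (h.symm.injective.ne hxy)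
    refine ⟨k, ?_⟩
    simpa [Equiv.Perm.zpow_eq_permCongr_of_semiconj h.toEquiv hconj, Equiv.permCongr_apply]
      using hk

theorem exists_continuous_pos_dist_le_imp_mem [PseudoMetricSpace T] {U : Set (T × T)}
    (hU : IsOpen U) (hdiag : diagonal T ⊆ U) :
    ∃ δ : T → ℝ, Continuous δ ∧ (∀ x, 0 < δ x) ∧ ∀ x y, dist x y ≤ δ x → (x, y) ∈ U := by
  -- `infDist _ ∅ = 0`, so `U = univ` needs a gauge of its own.
  rcases (Uᶜ).eq_empty_or_nonempty with hempty | hne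
  · exact ⟨fun _ => 1, continuous_const, fun _ => one_pos,
      fun x y _ => by simpa using congrArg ((x, y) ∈ ·) hempty⟩
  have hpos : ∀ x, 0 < infDist (x, x) Uᶜ := fun x => by
    rw [← infDist_pos_iff_notMem_closure hne, hU.isClosed_compl.closure_eq, notMem_compl_iff]
    exact hdiag (mem_diagonal x)
  refine ⟨fun x => infDist (x, x) Uᶜ / 2, ?_, fun x => half_pos (hpos x), fun x y hxy => ?_⟩
  · exact ((continuous_infDist_pt _).comp (continuous_id.prodMk continuous_id)).div_const 2
  · by_contra hmem
    have hle : infDist (x, x) Uᶜ ≤ dist x y := by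
      simpa [Prod.dist_eq] using infDist_le_dist_of_mem (x := (x, x)) (mem_compl hmem)
    linarith [hpos x]

theorem isTopologicallyExpansive_iff_hasExpansivityNhd [PseudoMetricSpace S] (f : S ≃ₜ S) :
    IsTopologicallyExpansive f ↔ HasExpansivityNhd f := by
  constructor
  · rintro ⟨ε, hεc, hεpos, hsep⟩
    refine ⟨{p | dist p.1 p.2 < ε p.1}, isOpen_lt (by fun_prop) (by fun_prop),
      fun p hp => ?_, fun x y hxy => ?_⟩
    · simp [mem_diagonal_iff.mp hp, hεpos]
    · obtain ⟨k, hk⟩ := hsep x y hxy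
      exact ⟨k, hk.not_gt⟩
  · rintro ⟨U, hUo, hdiag, hsep⟩
    obtain ⟨δ, hδc, hδpos, hδU⟩ := exists_continuous_pos_dist_le_imp_mem hUo hdiag
    refine ⟨δ, hδc, hδpos, fun x y hxy => ?_⟩
    obtain ⟨k, hk⟩ := hsep x y hxy
    exact ⟨k, lt_of_not_ge fun hle => hk (hδU _ _ hle)⟩

end

/-- Topological expansivity is a conjugacy invariant. -/
theorem expansive_of_conjugate {S T : Type*} [MetricSpace S] [MetricSpace T]
    (f : S ≃ₜ S) (g : T ≃ₜ T) (h : S ≃ₜ T)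
    (hconj : ∀ x : S, h (f x) = g (h x))
    (hexp : ∃ ε : S → ℝ, Continuous ε ∧ (∀ x, 0 < ε x) ∧
      ∀ x y : S, x ≠ y → ∃ k : ℤ,
        ε ((f.toEquiv ^ k) x) < dist ((f.toEquiv ^ k) x) ((f.toEquiv ^ k) y)) :
    ∃ ε : T → ℝ, Continuous ε ∧ (∀ x, 0 < ε x) ∧
      ∀ x y : T, x ≠ y → ∃ k : ℤ,
        ε ((g.toEquiv ^ k) x) < dist ((g.toEquiv ^ k) x) ((g.toEquiv ^ k) y) :=
  (isTopologicallyExpansive_iff_hasExpansivityNhd g).2 <|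
    ((isTopologicallyExpansive_iff_hasExpansivityNhd f).1 hexp).of_semiconj h hconj
end

section
/- If f : S → S and g : T → T are topologically conjugate homeomorphisms of metric spaces via a homeomorphism h, and f satisfies the topological shadowing property, then g satisfies the topological shadowing property. -/
/-!
Pull a pseudo-orbit of g back through h⁻¹, shadow it by an f-orbit, and push that orbit forward
through h. The tolerances transfer because a continuous map k has a continuous positive pointwise
modulus against any continuous positive γ: a radius ρ with d(x, z) < ρ(x) ⇒ d(k x, k z) < γ(k x).
Taking ρ(x) to be the distance from (x, x) to the closed set where this fails gives one; since the
tolerances are functions rather than constants, no uniform continuity (compactness) is needed.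
-/

open Metric

theorem exists_continuous_pos_forall_dist_lt_mem {A : Type*} [PseudoMetricSpace A]
    {U : Set (A × A)} (hU : IsOpen U) (hdiag : ∀ x, (x, x) ∈ U) :
    ∃ ρ : A → ℝ, Continuous ρ ∧ (∀ x, 0 < ρ x) ∧ ∀ x z, dist x z < ρ x → (x, z) ∈ U := by
  rcases (Uᶜ).eq_empty_or_nonempty with hempty | hne
  · exact ⟨fun _ => 1, continuous_const, fun _ => one_pos,
      fun x z _ => Set.compl_empty_iff.mp hempty ▸ Set.mem_univ (x, z)⟩
  refine ⟨fun x => infDist (x, x) Uᶜ, (continuous_infDist_pt _).comp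
      (continuous_id.prodMk continuous_id), fun x => ?_, fun x z hxz => ?_⟩
  · refine (infDist_pos_iff_notMem_closure hne).mp ?_
    rw [hU.isClosed_compl.closure_eq]
    exact not_not.mpr (hdiag x)
  · have hdist : dist (x, x) (x, z) = dist x z := by
      rw [Prod.dist_eq, dist_self, max_eq_right dist_nonneg]
    exact not_not.mp (notMem_of_dist_lt_infDist (hdist ▸ hxz))

theorem Continuous.exists_continuous_pos_modulus {A B : Type*} [PseudoMetricSpace A]
    [PseudoMetricSpace B] {k : A → B} (hk : Continuous k) {γ : B → ℝ} (hγ : Continuous γ)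
    (hγpos : ∀ b, 0 < γ b) :
    ∃ ρ : A → ℝ, Continuous ρ ∧ (∀ x, 0 < ρ x) ∧
      ∀ x z, dist x z < ρ x → dist (k x) (k z) < γ (k x) :=
  exists_continuous_pos_forall_dist_lt_mem (U := {p | dist (k p.1) (k p.2) < γ (k p.1)})
    (isOpen_lt (hk.comp continuous_fst |>.dist (hk.comp continuous_snd))
      (hγ.comp (hk.comp continuous_fst)))
    (fun x => by simpa using hγpos (k x))

theorem Equiv.Perm.apply_zpow_of_semiconj {α β : Type*} (e : α ≃ β) {f : Equiv.Perm α}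
    {g : Equiv.Perm β} (hfg : ∀ x, e (f x) = g (e x)) (n : ℤ) (x : α) :
    e ((f ^ n) x) = (g ^ n) (e x) := by
  have hg : e.permCongrHom f = g := Equiv.ext fun y => by
    simp [Equiv.permCongrHom_coe, Equiv.permCongr_apply, hfg]
  rw [← hg, ← map_zpow, Equiv.permCongrHom_coe, Equiv.permCongr_apply, Equiv.symm_apply_apply]

/-- The topological shadowing property is a conjugacy invariant. -/
theorem shadowing_of_conjugate {S T : Type*} [MetricSpace S] [MetricSpace T]
    (f : S ≃ₜ S) (g : T ≃ₜ T) (h : S ≃ₜ T)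
    (hconj : ∀ x : S, h (f x) = g (h x))
    (hshad : ∀ ε : S → ℝ, Continuous ε → (∀ x, 0 < ε x) →
      ∃ δ : S → ℝ, Continuous δ ∧ (∀ x, 0 < δ x) ∧
        ∀ xs : ℤ → S, (∀ n : ℤ, dist (f (xs n)) (xs (n + 1)) < δ (f (xs n))) →
          ∃ x : S, ∀ n : ℤ, dist (xs n) ((f.toEquiv ^ n) x) < ε (xs n)) :
    ∀ ε : T → ℝ, Continuous ε → (∀ x, 0 < ε x) →
      ∃ δ : T → ℝ, Continuous δ ∧ (∀ x, 0 < δ x) ∧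
        ∀ xs : ℤ → T, (∀ n : ℤ, dist (g (xs n)) (xs (n + 1)) < δ (g (xs n))) →
          ∃ x : T, ∀ n : ℤ, dist (xs n) ((g.toEquiv ^ n) x) < ε (xs n) := by
  intro ε hε hεpos
  obtain ⟨εS, hεS, hεSpos, hεS_mod⟩ := h.continuous.exists_continuous_pos_modulus hε hεpos
  obtain ⟨δS, hδS, hδSpos, hδS_shadow⟩ := hshad εS hεS hεSpos
  obtain ⟨δ, hδ, hδpos, hδ_mod⟩ := h.symm.continuous.exists_continuous_pos_modulus hδS hδSpos
  refine ⟨δ, hδ, hδpos, fun ys hys => ?_⟩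
  have hf_symm : ∀ y, f (h.symm y) = h.symm (g y) := fun y => h.injective <| by
    rw [hconj, Homeomorph.apply_symm_apply, Homeomorph.apply_symm_apply]
  have hpseudo : ∀ n : ℤ, dist (f (h.symm (ys n))) (h.symm (ys (n + 1))) <
      δS (f (h.symm (ys n))) := fun n => by
    simpa only [hf_symm] using hδ_mod _ _ (hys n)
  obtain ⟨x, hx⟩ := hδS_shadow (fun n => h.symm (ys n)) hpseudo
  refine ⟨h x, fun n => ?_⟩
  have hconj_zpow : h ((f.toEquiv ^ n) x) = (g.toEquiv ^ n) (h x) :=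
    Equiv.Perm.apply_zpow_of_semiconj h.toEquiv hconj n x
  simpa only [hconj_zpow, Homeomorph.apply_symm_apply] using hεS_mod _ _ (hx n)
end

section
/- The rigid translation f : ℝ → ℝ, f(x) = x + 1, does not satisfy the topological shadowing property. -/
/-!
Since `ε(x) = (1 + |x|)⁻¹` tends to `0` at `±∞`, an orbit `n ↦ x + n` that `ε`-shadows a
pseudo-orbit must agree with it asymptotically at both ends. The pseudo-orbit that follows the
orbit of `0` for `n ≤ 0` and the orbit of `c ≠ 0` for `n > 0` (one jump of size `c`, admissible
once `|c| < δ 1`) would force `x = 0` and `x = c` simultaneously.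
-/

open Filter Topology

def jumpOrbit (c : ℝ) (n : ℤ) : ℝ := n + if 0 < n then c else 0

lemma jumpOrbit_of_nonpos (c : ℝ) {n : ℤ} (hn : n ≤ 0) : jumpOrbit c n = n := by
  simp [jumpOrbit, not_lt.2 hn]

lemma jumpOrbit_of_pos (c : ℝ) {n : ℤ} (hn : 0 < n) : jumpOrbit c n = n + c := by
  simp [jumpOrbit, hn]

lemma abs_jumpOrbit_add_one_sub_lt {δ : ℝ → ℝ} (hδ : ∀ x, 0 < δ x) {c : ℝ} (hc : |c| < δ 1)
    (n : ℤ) : |jumpOrbit c n + 1 - jumpOrbit c (n + 1)| < δ (jumpOrbit c n + 1) := by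
  rcases lt_trichotomy n 0 with hn | rfl | hn
  · rw [jumpOrbit_of_nonpos c hn.le, jumpOrbit_of_nonpos c (by omega)]
    simpa using hδ _
  · rw [jumpOrbit_of_nonpos c le_rfl, zero_add, jumpOrbit_of_pos c zero_lt_one]
    simpa [abs_sub_comm] using hc
  · rw [jumpOrbit_of_pos c hn, jumpOrbit_of_pos c (by omega)]
    simpa [add_right_comm] using hδ _

lemma jumpOrbit_not_shadowed {ε : ℝ → ℝ} (hε : Tendsto ε (cocompact ℝ) (𝓝 0)) {c : ℝ}
    (hc : c ≠ 0) (x : ℝ) : ∃ n : ℤ, ¬ |jumpOrbit c n - (x + n)| < ε (jumpOrbit c n) := by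
  by_contra! hshadow
  rw [cocompact_eq_atBot_atTop, tendsto_sup] at hε
  have hx : |x| ≤ 0 := by
    refine ge_of_tendsto (hε.1.comp (tendsto_intCast_atBot_iff.2 tendsto_id)) ?_
    filter_upwards [eventually_le_atBot 0] with n hn
    simpa [jumpOrbit_of_nonpos c hn] using (hshadow n).le
  have hxc : |c - x| ≤ 0 := by
    refine ge_of_tendsto (hε.2.comp (tendsto_atTop_add_const_right _ c
      (tendsto_intCast_atTop_iff.2 tendsto_id))) ?_
    filter_upwards [eventually_gt_atTop 0] with n hn
    simpa [jumpOrbit_of_pos c hn, abs_sub_comm, add_comm] using (hshadow n).le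
  exact hc (by linarith [abs_nonpos_iff.1 hx, abs_nonpos_iff.1 hxc])

lemma tendsto_inv_one_add_abs_cocompact :
    Tendsto (fun x : ℝ => (1 + |x|)⁻¹) (cocompact ℝ) (𝓝 0) :=
  tendsto_inv_atTop_zero.comp <| tendsto_atTop_add_const_left _ 1 <|
    tendsto_norm_cocompact_atTop.congr Real.norm_eq_abs

/-- The rigid translation `x ↦ x + 1` of the real line does not satisfy the
topological shadowing property: there is a continuous strictly positive `ε`
such that for every continuous strictly positive `δ` some `δ`-pseudo-orbit is
not `ε`-shadowed by any orbit.  Here the `n`-th iterate is `x ↦ x + n`. -/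
theorem translation_not_shadowing :
    ∃ ε : ℝ → ℝ, Continuous ε ∧ (∀ x, 0 < ε x) ∧
      ∀ δ : ℝ → ℝ, Continuous δ → (∀ x, 0 < δ x) →
        ∃ xs : ℤ → ℝ, (∀ n : ℤ, |xs n + 1 - xs (n + 1)| < δ (xs n + 1)) ∧
          ∀ x : ℝ, ∃ n : ℤ, ¬ |xs n - (x + n)| < ε (xs n) := by
  refine ⟨fun x => (1 + |x|)⁻¹, by fun_prop (disch := intro x; positivity),
    fun x => by positivity, fun δ _ hδ => ?_⟩
  have hδ1 : 0 < δ 1 / 2 := half_pos (hδ 1)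
  refine ⟨jumpOrbit (δ 1 / 2), abs_jumpOrbit_add_one_sub_lt hδ ?_,
    jumpOrbit_not_shadowed tendsto_inv_one_add_abs_cocompact hδ1.ne'⟩
  rw [abs_of_pos hδ1]
  exact half_lt_self (hδ 1)
end

section
/- Let f : S → S be a homeomorphism of a metric space, and let Λ ⊆ S be an f-invariant set on which f is topologically transitive, meaning there exists x ∈ Λ whose forward orbit and backward orbit are both dense in Λ. If Λ is not contained in any compact set and every point of S has either a bounded forward orbit or a bounded backward orbit, then we reach a contradiction; hence if every point has a bounded forward or backward orbit, every closed invariant set admitting a point with dense forward and dense backward orbit is compact, provided Λ is closed. -/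
/-!
The transitive point has a bounded orbit in at least one time direction, and that half-orbit is
dense in `Λ`; so the closed set `Λ` lies in the closure of a compact set, which is compact.
-/

theorem isCompact_of_subset_closure_seq {X : Type*} [TopologicalSpace X] [R1Space X]
    {Λ K : Set X} {u : ℕ → X} (hΛ : IsClosed Λ) (hK : IsCompact K) (huK : ∀ m, u m ∈ K)
    (hΛu : Λ ⊆ closure {y | ∃ m : ℕ, y = u m}) : IsCompact Λ :=
  (hK.closure_of_subset (by rintro _ ⟨m, rfl⟩; exact huK m)).of_isClosed_subset hΛ hΛu

theorem basic_sets_compact_general {S : Type*} [MetricSpace S]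
    (f : S ≃ₜ S) (Λ : Set S) (hclosed : IsClosed Λ)
    (htrans : ∃ x ∈ Λ,
      Λ ⊆ closure {y | ∃ m : ℕ, y = (f.toEquiv ^ (m : ℤ)) x} ∧
      Λ ⊆ closure {y | ∃ m : ℕ, y = (f.toEquiv ^ (-(m : ℤ))) x})
    (hbounded : ∀ x : S,
      (∃ K : Set S, IsCompact K ∧ ∀ m : ℕ, (f.toEquiv ^ (m : ℤ)) x ∈ K) ∨
      (∃ K : Set S, IsCompact K ∧ ∀ m : ℕ, (f.toEquiv ^ (-(m : ℤ))) x ∈ K)) :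
    IsCompact Λ := by
  obtain ⟨x, -, hforward_dense, hbackward_dense⟩ := htrans
  rcases hbounded x with ⟨K, hK, hforward⟩ | ⟨K, hK, hbackward⟩
  · exact isCompact_of_subset_closure_seq hclosed hK hforward hforward_dense
  · exact isCompact_of_subset_closure_seq hclosed hK hbackward hbackward_dense

/-- In a proper metric space, if every point has bounded forward or backward
orbit, then every closed invariant set containing a point with dense forward
and dense backward orbit is compact. -/
theorem basic_sets_compact {S : Type*} [MetricSpace S] [ProperSpace S]
    (f : S ≃ₜ S) (Λ : Set S) (hclosed : IsClosed Λ) (hinv : f '' Λ = Λ)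
    (htrans : ∃ x ∈ Λ,
      Λ ⊆ closure {y | ∃ m : ℕ, y = (f.toEquiv ^ (m : ℤ)) x} ∧
      Λ ⊆ closure {y | ∃ m : ℕ, y = (f.toEquiv ^ (-(m : ℤ))) x})
    (hbounded : ∀ x : S,
      (∃ K : Set S, IsCompact K ∧ ∀ m : ℕ, (f.toEquiv ^ (m : ℤ)) x ∈ K) ∨
      (∃ K : Set S, IsCompact K ∧ ∀ m : ℕ, (f.toEquiv ^ (-(m : ℤ))) x ∈ K)) :
    IsCompact Λ :=
  basic_sets_compact_general f Λ hclosed htrans hbounded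
end

section
/- Let f : S → S be a homeomorphism of a metric space and K a compact f-invariant set with expansivity constant C > 0 (for all distinct x, y ∈ K there is n ∈ ℤ with d(f^n x, f^n y) > C). Suppose that for every x ∈ K there exist a neighborhood U of x and a point z ∈ U such that the orbit of z C/2-shadows every sequence (x_n)_{n∈ℤ} of the form x_n = f^n(y) for n < 0 (for some y ∈ U) and x_n = f^n(z) for n ≥ 0; that is, d(f^n y, f^n z) < C/2 for all n < 0 and all y ∈ U. Then K is finite. -/
/-!
Cover `K` by finitely many shadowing neighbourhoods `U₁, …, U_k`. Two points of one `Uᵢ` are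
`C/2`-close to the same `zᵢ` at all negative times, hence `C`-close to each other. So if the
`m`-th images of `p, q ∈ K` lie in the same `Uᵢ`, the orbits of `p` and `q` are `C`-close at all
times `n < m`. By compactness, expansivity is uniform: for every `ε > 0`, points of `K` whose orbits
are `C`-close on a large enough finite window are `ε`-close. Hence for every `ε` the points of `K`
fall into at most `k` classes of mutually `ε`-close points, which forces `#K ≤ k`.
-/

open Set

theorem Homeomorph.continuous_toEquiv_zpow {X : Type*} [TopologicalSpace X] (f : X ≃ₜ X) (n : ℤ) :
    Continuous ⇑(f.toEquiv ^ n) := by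
  have h : (f ^ n).toEquiv = f.toEquiv ^ n :=
    map_zpow (MonoidHom.mk' (Homeomorph.toEquiv (X := X) (Y := X)) fun _ _ => rfl) f n
  rw [← h]
  exact (f ^ n).continuous

theorem Equiv.Perm.mapsTo_pow {α : Type*} (σ : Equiv.Perm α) {s : Set α} (h : MapsTo σ s s) (m : ℕ) :
    MapsTo ⇑(σ ^ m) s s := by
  rw [Equiv.Perm.coe_pow]
  exact h.iterate m

theorem Set.Finite.exists_pos_forall_le_dist {X : Type*} [MetricSpace X] {s : Set X}
    (hs : s.Finite) : ∃ ε > 0, ∀ x ∈ s, ∀ y ∈ s, x ≠ y → ε ≤ dist x y := by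
  rcases s.subsingleton_or_nontrivial with h | h
  · exact ⟨1, one_pos, fun x hx y hy hxy => absurd (h hx hy) hxy⟩
  · exact ⟨s.infsep, hs.infsep_pos_iff_nontrivial.2 h,
      fun x hx y hy hxy => infsep_le_dist_of_mem hx hy hxy⟩

theorem Set.finite_of_forall_exists_mapsTo_dist_lt {X α : Type*} [MetricSpace X] {K : Set X}
    (t : Finset α) (h : ∀ ε > 0, ∃ c : X → α, MapsTo c K t ∧
      ∀ x ∈ K, ∀ y ∈ K, c x = c y → dist x y < ε) : K.Finite := by
  by_contra hK
  obtain ⟨A, hAK, hA⟩ := Set.Infinite.exists_subset_card_eq hK (t.card + 1)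
  obtain ⟨ε, hε, hsep⟩ := A.finite_toSet.exists_pos_forall_le_dist
  obtain ⟨c, hcK, hclose⟩ := h ε hε
  obtain ⟨x, hx, y, hy, hxy, hcxy⟩ :=
    Finset.exists_ne_map_eq_of_card_lt_of_maps_to (by omega) (hcK.mono_left hAK)
  exact (hclose x (hAK hx) y (hAK hy) hcxy).not_ge (hsep x hx y hy hxy)

theorem IsCompact.exists_finset_dist_lt_of_forall_lt_dist {X Y ι : Type*} [PseudoMetricSpace X]
    [PseudoMetricSpace Y] {K : Set X} (hK : IsCompact K) {g : ι → X → Y}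
    (hg : ∀ i, Continuous (g i)) {C : ℝ}
    (hsep : ∀ x ∈ K, ∀ y ∈ K, x ≠ y → ∃ i, C < dist (g i x) (g i y)) {ε : ℝ} (hε : 0 < ε) :
    ∃ s : Finset ι, ∀ x ∈ K, ∀ y ∈ K, (∀ i ∈ s, dist (g i x) (g i y) ≤ C) → dist x y < ε := by
  have hD : IsCompact ((K ×ˢ K) ∩ {p | ε ≤ dist p.1 p.2}) :=
    (hK.prod hK).inter_right (isClosed_le continuous_const continuous_dist)
  obtain ⟨s, hs⟩ := hD.elim_finite_subcover (fun i => {p : X × X | C < dist (g i p.1) (g i p.2)})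
    (fun i => isOpen_lt continuous_const
      (((hg i).comp continuous_fst).dist ((hg i).comp continuous_snd)))
    (fun p ⟨⟨hx, hy⟩, hp⟩ => mem_iUnion.2 <| hsep p.1 hx p.2 hy fun h =>
      (show ε ≤ dist p.1 p.2 from hp).not_gt (by rwa [h, dist_self]))
  refine ⟨s, fun x hx y hy hC => not_le.1 fun hxy => ?_⟩
  obtain ⟨i, hi, hCi⟩ := mem_iUnion₂.1 (hs (show (x, y) ∈ _ from ⟨⟨hx, hy⟩, hxy⟩))
  exact (hC i hi).not_gt hCi

theorem Equiv.Perm.dist_zpow_lt_of_forall_dist_zpow_neg_lt {X : Type*} [PseudoMetricSpace X]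
    (σ : Equiv.Perm X) {m n : ℤ} (hnm : n < m) {x y : X} {C : ℝ}
    (h : ∀ j : ℕ, 0 < j →
      dist ((σ ^ (-(j : ℤ))) ((σ ^ m) x)) ((σ ^ (-(j : ℤ))) ((σ ^ m) y)) < C) :
    dist ((σ ^ n) x) ((σ ^ n) y) < C := by
  have hback : ∀ z, (σ ^ (-((m - n).toNat : ℤ))) ((σ ^ m) z) = (σ ^ n) z := fun z => by
    rw [← Equiv.Perm.mul_apply, ← zpow_add]
    congr
    omega
  simpa only [hback] using h (m - n).toNat (by omega)

theorem compact_expansive_locally_shadowed_finite_general {S : Type*} [MetricSpace S]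
    (f : S ≃ₜ S) (K : Set S) (hK : IsCompact K) (hinv : f '' K = K)
    (C : ℝ)
    (hexp : ∀ x ∈ K, ∀ y ∈ K, x ≠ y →
      ∃ m : ℤ, C < dist ((f.toEquiv ^ m) x) ((f.toEquiv ^ m) y))
    (hshad : ∀ x ∈ K, ∃ U ∈ nhds x, ∃ z ∈ U, ∀ y ∈ U, ∀ m : ℕ, 0 < m →
      dist ((f.toEquiv ^ (-(m : ℤ))) y) ((f.toEquiv ^ (-(m : ℤ))) z) < C / 2) :
    K.Finite := by
  have hpast : ∀ x ∈ K, ∃ U ∈ nhds x, ∀ y ∈ U, ∀ y' ∈ U, ∀ j : ℕ, 0 < j →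
      dist ((f.toEquiv ^ (-(j : ℤ))) y) ((f.toEquiv ^ (-(j : ℤ))) y') < C := by
    intro x hx
    obtain ⟨U, hU, z, -, hz⟩ := hshad x hx
    exact ⟨U, hU, fun y hy y' hy' j hj =>
      (dist_triangle_right _ _ _).trans_lt (by linarith [hz y hy j hj, hz y' hy' j hj])⟩
  choose! U hU hUpast using hpast
  obtain ⟨t, htK, hcover⟩ := hK.elim_nhds_subcover U hU
  have hlabel : ∀ y ∈ K, ∃ x ∈ t, y ∈ U x := fun y hy => by simpa using hcover hy
  choose! label hlabel_t hlabel_U using hlabel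
  refine Set.finite_of_forall_exists_mapsTo_dist_lt t fun ε hε => ?_
  obtain ⟨s, hs⟩ := hK.exists_finset_dist_lt_of_forall_lt_dist f.continuous_toEquiv_zpow hexp hε
  obtain ⟨M, hM⟩ := s.bddAbove
  set m := M.toNat + 1
  have hmK : MapsTo ⇑(f.toEquiv ^ (m : ℤ)) K K := by
    rw [zpow_natCast]
    exact Equiv.Perm.mapsTo_pow f.toEquiv (fun x hx => hinv ▸ mem_image_of_mem f hx) m
  refine ⟨fun a => label ((f.toEquiv ^ (m : ℤ)) a), fun a ha => hlabel_t _ (hmK ha),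
    fun p hp q hq hpq => hs p hp q hq fun n hn => ?_⟩
  have hpU := hlabel_U _ (hmK hp)
  have hqU : (f.toEquiv ^ (m : ℤ)) q ∈ U (label ((f.toEquiv ^ (m : ℤ)) p)) :=
    (congrArg U hpq).symm ▸ hlabel_U _ (hmK hq)
  refine (Equiv.Perm.dist_zpow_lt_of_forall_dist_zpow_neg_lt f.toEquiv (m := m)
    (by have := hM hn; omega) ?_).le
  exact hUpast _ (htK _ (hlabel_t _ (hmK hp))) _ hpU _ hqU

/-- Lemma 4.2: a compact invariant set with expansivity constant `C`, such that
near every point there is a point `z` whose orbit `C/2`-shadows every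
pseudo-orbit made of a past orbit in the neighborhood followed by the future
orbit of `z`, is finite. -/
theorem compact_expansive_locally_shadowed_finite {S : Type*} [MetricSpace S]
    (f : S ≃ₜ S) (K : Set S) (hK : IsCompact K) (hinv : f '' K = K)
    (C : ℝ) (hC : 0 < C)
    (hexp : ∀ x ∈ K, ∀ y ∈ K, x ≠ y →
      ∃ m : ℤ, C < dist ((f.toEquiv ^ m) x) ((f.toEquiv ^ m) y))
    (hshad : ∀ x ∈ K, ∃ U ∈ nhds x, ∃ z ∈ U, ∀ y ∈ U, ∀ m : ℕ, 0 < m →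
      dist ((f.toEquiv ^ (-(m : ℤ))) y) ((f.toEquiv ^ (-(m : ℤ))) z) < C / 2) :
    K.Finite :=
  compact_expansive_locally_shadowed_finite_general f K hK hinv C hexp hshad
end
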